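/- Let X₁, …, Xₙ and Y₁, …, Y_m be independent Bernoulli random variables with E[Xᵢ] = pᵢ and E[Y_j] = q_j, and suppose Σ_{i=1}^n pᵢ = Σ_{j=1}^m q_j = μ > 0. Then d_TV( Σ_{i=1}^n Xᵢ, Σ_{j=1}^m Y_j ) ≤ ( Σ_{i=1}^n pᵢ² + Σ_{j=1}^m q_j² ) / μ. -/

import Mathlib

/-!
Stein–Chen method: compare each sum with the Poisson law `Po(λ)`, `λ = ∑ pᵢ`, and apply the
triangle inequality. For `B ⊆ ℕ` let `f` solve the Stein equation
`λ f(k+1) - k f(k) = 1_B(k) - Po(λ)(B)`. With `W = ∑ Xᵢ` and `Wᵢ = W - Xᵢ`, independence of `Xᵢ`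
and `Wᵢ` gives `E[Xᵢ g(W)] = pᵢ E[g(Wᵢ + 1)]`, hence
`P(W ∈ B) - Po(λ)(B) = E[λ f(W+1) - W f(W)] = ∑ pᵢ² E[f(Wᵢ+2) - f(Wᵢ+1)]`.
The increments of `f` are at most `1/λ` in absolute value: with `πₖ`, `Fₖ` the Poisson weights
and distribution function, `λ f(k+1) = P(B ∩ [0,k]) (1 - Fₖ)/πₖ - P(B ∩ (k,∞)) Fₖ/πₖ`, where
`Fₖ/πₖ` increases and `(1 - Fₖ)/πₖ` decreases in `k`, so only the term at `k + 1 ∈ B` can make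
the increment positive, and it contributes at most `π_{k+1} ((1 - F_{k+1}) + F_{k+1})/π_{k+1} = 1`
to `λ (f(k+2) - f(k+1))`; the lower bound follows from `Bᶜ`, whose solution is `-f`.
-/

open MeasureTheory ProbabilityTheory

/-- Total variation distance between two distributions on `ℝ`:
`sup_{A measurable} |ν₁(A) - ν₂(A)|`. -/
noncomputable def dTV (ν₁ ν₂ : Measure ℝ) : ℝ :=
  ⨆ A : {s : Set ℝ // MeasurableSet s}, |(ν₁ A).toReal - (ν₂ A).toReal|

open Finset
open scoped NNReal

section PoissonSteinSolution

variable {r : ℝ≥0}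

lemma hasSum_poissonMeasure_real_singleton (r : ℝ≥0) :
    HasSum (fun k ↦ Po(r).real {k}) 1 := by
  simpa only [poissonMeasure_real_singleton] using hasSum_one_poissonMeasure r

lemma succ_mul_poissonMeasure_real_singleton_succ (r : ℝ≥0) (k : ℕ) :
    ((k : ℝ) + 1) * Po(r).real {k + 1} = r * Po(r).real {k} := by
  simp only [poissonMeasure_real_singleton, Nat.factorial_succ, pow_succ]
  push_cast
  field_simp

lemma hasSum_indicator_poissonMeasure_real (r : ℝ≥0) (B : Set ℕ) :
    HasSum (B.indicator fun k ↦ Po(r).real {k}) (Po(r).real B) := by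
  have h : (B.indicator fun k ↦ Po(r).real {k}) =
      fun k ↦ (Real.exp (-r) * r ^ k / k.factorial) • B.indicator 1 k := by
    funext k
    by_cases hk : k ∈ B <;> simp [hk, poissonMeasure_real_singleton]
  rw [h, ← integral_indicator_one .of_discrete]
  exact hasSum_integral_poissonMeasure ((integrable_const 1).indicator .of_discrete)

noncomputable def poissonCDF (r : ℝ≥0) (k : ℕ) : ℝ := ∑ i ∈ range (k + 1), Po(r).real {i}

lemma poissonCDF_nonneg (r : ℝ≥0) (k : ℕ) : 0 ≤ poissonCDF r k :=
  sum_nonneg fun _ _ ↦ measureReal_nonneg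

lemma hasSum_poissonMeasure_real_add (r : ℝ≥0) (k : ℕ) :
    HasSum (fun i ↦ Po(r).real {i + (k + 1)}) (1 - poissonCDF r k) :=
  (hasSum_nat_add_iff' (k + 1)).mpr (hasSum_poissonMeasure_real_singleton r)

lemma poissonCDF_le_one (r : ℝ≥0) (k : ℕ) : poissonCDF r k ≤ 1 :=
  sub_nonneg.mp ((hasSum_poissonMeasure_real_add r k).nonneg fun _ ↦ measureReal_nonneg)

lemma mul_poissonCDF_le (r : ℝ≥0) (k : ℕ) :
    r * poissonCDF r k ≤ ((k : ℝ) + 1) * poissonCDF r (k + 1) := calc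
  r * poissonCDF r k = ∑ i ∈ range (k + 1), ((i : ℝ) + 1) * Po(r).real {i + 1} := by
    simp only [poissonCDF, mul_sum, succ_mul_poissonMeasure_real_singleton_succ]
  _ ≤ ∑ i ∈ range (k + 1), ((k : ℝ) + 1) * Po(r).real {i + 1} := by
    gcongr with i hi
    exact_mod_cast Nat.lt_succ_iff.mp (mem_range.mp hi)
  _ ≤ ((k : ℝ) + 1) * poissonCDF r (k + 1) := by
    rw [← mul_sum, poissonCDF, sum_range_succ' _ (k + 1)]
    gcongr
    exact le_add_of_nonneg_right measureReal_nonneg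

lemma succ_mul_one_sub_poissonCDF_le (r : ℝ≥0) (k : ℕ) :
    ((k : ℝ) + 1) * (1 - poissonCDF r (k + 1)) ≤ r * (1 - poissonCDF r k) := by
  refine hasSum_le (fun i ↦ ?_) ((hasSum_poissonMeasure_real_add r (k + 1)).mul_left _)
    ((hasSum_poissonMeasure_real_add r k).mul_left _)
  rw [← succ_mul_poissonMeasure_real_singleton_succ, show i + (k + 1 + 1) = i + (k + 1) + 1 by ring]
  gcongr
  omega

lemma poissonCDF_div_le_succ (hr : 0 < r) (k : ℕ) :
    poissonCDF r k / Po(r).real {k} ≤ poissonCDF r (k + 1) / Po(r).real {k + 1} := by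
  have h₀ := poissonMeasure_real_singleton_pos k hr
  have h₁ := poissonMeasure_real_singleton_pos (k + 1) hr
  rw [div_le_div_iff₀ h₀ h₁]
  nlinarith [mul_poissonCDF_le r k, succ_mul_poissonMeasure_real_singleton_succ r k,
    poissonCDF_nonneg r k]

lemma one_sub_poissonCDF_div_succ_le (hr : 0 < r) (k : ℕ) :
    (1 - poissonCDF r (k + 1)) / Po(r).real {k + 1} ≤ (1 - poissonCDF r k) / Po(r).real {k} := by
  have h₀ := poissonMeasure_real_singleton_pos k hr
  have h₁ := poissonMeasure_real_singleton_pos (k + 1) hr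
  rw [div_le_div_iff₀ h₁ h₀]
  nlinarith [succ_mul_one_sub_poissonCDF_le r k, succ_mul_poissonMeasure_real_singleton_succ r k,
    poissonCDF_le_one r k]

noncomputable def poissonSteinSol (r : ℝ≥0) (h : ℕ → ℝ) : ℕ → ℝ
  | 0 => 0
  | k + 1 => (∑ i ∈ range (k + 1), Po(r).real {i} * h i) / (r * Po(r).real {k})

lemma poissonSteinSol_spec (hr : 0 < r) (h : ℕ → ℝ) (k : ℕ) :
    r * poissonSteinSol r h (k + 1) - k * poissonSteinSol r h k = h k := by
  have hr' : (r : ℝ) ≠ 0 := by positivity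
  cases k with
  | zero =>
    have hπ := poissonMeasure_real_singleton_pos 0 hr
    simp [poissonSteinSol]
    field_simp
  | succ k =>
    have hπ := poissonMeasure_real_singleton_pos k hr
    have hπ' := poissonMeasure_real_singleton_pos (k + 1) hr
    have hk : ((k + 1 : ℕ) : ℝ) / (r * Po(r).real {k}) = 1 / Po(r).real {k + 1} := by
      rw [div_eq_div_iff (by positivity) hπ'.ne', Nat.cast_succ,
        succ_mul_poissonMeasure_real_singleton_succ, one_mul]
    simp only [poissonSteinSol, sum_range_succ _ (k + 1)]
    rw [mul_div_left_comm ((k + 1 : ℕ) : ℝ), hk]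
    field_simp
    ring

lemma poissonSteinSol_neg (r : ℝ≥0) (h : ℕ → ℝ) :
    poissonSteinSol r (-h) = -poissonSteinSol r h := by
  funext k
  cases k <;> simp [poissonSteinSol, neg_div]

lemma mul_poissonSteinSol_indicator_succ (hr : 0 < r) (B : Set ℕ) (k : ℕ) :
    r * poissonSteinSol r (B.indicator 1 - fun _ ↦ Po(r).real B) (k + 1) =
      (∑ i ∈ range (k + 1), B.indicator (fun j ↦ Po(r).real {j}) i) *
          ((1 - poissonCDF r k) / Po(r).real {k}) -
        (Po(r).real B - ∑ i ∈ range (k + 1), B.indicator (fun j ↦ Po(r).real {j}) i) *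
          (poissonCDF r k / Po(r).real {k}) := by
  have hπ := poissonMeasure_real_singleton_pos k hr
  have hr' : (r : ℝ) ≠ 0 := by positivity
  have hsum : ∑ i ∈ range (k + 1), Po(r).real {i} * (B.indicator 1 i - Po(r).real B) =
      ∑ i ∈ range (k + 1), B.indicator (fun j ↦ Po(r).real {j}) i -
        Po(r).real B * poissonCDF r k := by
    rw [poissonCDF, mul_sum, ← sum_sub_distrib]
    refine sum_congr rfl fun i _ ↦ ?_
    by_cases hi : i ∈ B <;> simp [hi] <;> ring
  simp only [poissonSteinSol, Pi.sub_apply, hsum]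
  field_simp
  ring

lemma poissonSteinSol_indicator_succ_sub_le (hr : 0 < r) (B : Set ℕ) (k : ℕ) :
    poissonSteinSol r (B.indicator 1 - fun _ ↦ Po(r).real B) (k + 2) -
      poissonSteinSol r (B.indicator 1 - fun _ ↦ Po(r).real B) (k + 1) ≤ 1 / r := by
  set π : ℕ → ℝ := fun j ↦ Po(r).real {j}
  set S : ℕ → ℝ := fun k ↦ ∑ i ∈ range (k + 1), B.indicator π i
  set a : ℕ → ℝ := fun k ↦ poissonCDF r k / π k
  set b : ℕ → ℝ := fun k ↦ (1 - poissonCDF r k) / π k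
  set e := B.indicator π (k + 1)
  have hS : S (k + 1) = S k + e := sum_range_succ _ _
  have hS_nonneg : 0 ≤ S k :=
    Finset.sum_nonneg fun _ _ ↦ Set.indicator_nonneg (fun _ _ ↦ measureReal_nonneg) _
  have hS_le : S (k + 1) ≤ Po(r).real B :=
    sum_le_hasSum _ (fun _ _ ↦ Set.indicator_nonneg (fun _ _ ↦ measureReal_nonneg) _)
      (hasSum_indicator_poissonMeasure_real r B)
  have he : e ≤ π (k + 1) := Set.indicator_le_self' (fun _ _ ↦ measureReal_nonneg) _
  have hπ : 0 < π (k + 1) := poissonMeasure_real_singleton_pos (k + 1) hr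
  have ha : a k ≤ a (k + 1) := poissonCDF_div_le_succ hr k
  have hb : b (k + 1) ≤ b k := one_sub_poissonCDF_div_succ_le hr k
  have ha_nonneg : 0 ≤ a k := div_nonneg (poissonCDF_nonneg r k) measureReal_nonneg
  have hb_nonneg : 0 ≤ b (k + 1) :=
    div_nonneg (sub_nonneg.mpr (poissonCDF_le_one r _)) measureReal_nonneg
  have hab : π (k + 1) * (b (k + 1) + a (k + 1)) = 1 := by
    simp only [a, b]
    field_simp
    ring
  have key : r * (poissonSteinSol r (B.indicator 1 - fun _ ↦ Po(r).real B) (k + 2) -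
      poissonSteinSol r (B.indicator 1 - fun _ ↦ Po(r).real B) (k + 1)) ≤ 1 := by
    rw [mul_sub, mul_poissonSteinSol_indicator_succ hr, mul_poissonSteinSol_indicator_succ hr]
    change S (k + 1) * b (k + 1) - (Po(r).real B - S (k + 1)) * a (k + 1) -
      (S k * b k - (Po(r).real B - S k) * a k) ≤ 1
    nlinarith [mul_nonpos_of_nonneg_of_nonpos hS_nonneg (sub_nonpos.mpr hb),
      mul_nonpos_of_nonneg_of_nonpos (sub_nonneg.mpr hS_le) (sub_nonpos.mpr ha),
      mul_le_mul he (by linarith : b (k + 1) + a k ≤ b (k + 1) + a (k + 1))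
        (add_nonneg hb_nonneg ha_nonneg) hπ.le]
  rwa [le_div_iff₀ (by positivity), mul_comm]

lemma abs_poissonSteinSol_indicator_succ_sub_le (hr : 0 < r) (B : Set ℕ) (k : ℕ) :
    |poissonSteinSol r (B.indicator 1 - fun _ ↦ Po(r).real B) (k + 2) -
      poissonSteinSol r (B.indicator 1 - fun _ ↦ Po(r).real B) (k + 1)| ≤ 1 / r := by
  have hcompl : (Bᶜ.indicator 1 - fun _ ↦ Po(r).real Bᶜ) =
      -(B.indicator 1 - fun _ ↦ Po(r).real B) := by
    funext j
    rw [probReal_compl_eq_one_sub .of_discrete]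
    by_cases hj : j ∈ B <;> simp [hj]
  have := poissonSteinSol_indicator_succ_sub_le hr Bᶜ k
  rw [hcompl, poissonSteinSol_neg] at this
  rw [abs_le]
  constructor
  · simp only [Pi.neg_apply] at this
    linarith
  · exact poissonSteinSol_indicator_succ_sub_le hr B k

end PoissonSteinSolution

lemma sum_le_card_of_le_one {ι α : Type*} [Fintype ι] {N : ι → α → ℕ} (hle : ∀ i a, N i a ≤ 1)
    (s : Finset ι) (a : α) : ∑ j ∈ s, N j a ≤ Fintype.card ι :=
  (sum_le_card_nsmul s _ 1 fun j _ ↦ hle j a).trans (by simpa using card_le_univ s)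

section BernoulliSum

variable {Ω ι : Type*} [MeasurableSpace Ω] {μ : Measure Ω} [Fintype ι] {N : ι → Ω → ℕ}

lemma integrable_comp_of_le [IsFiniteMeasure μ] {W : Ω → ℕ} (hW : Measurable W) {n : ℕ}
    (hle : ∀ ω, W ω ≤ n) (g : ℕ → ℝ) : Integrable (fun ω ↦ g (W ω)) μ :=
  .of_bound (Measurable.of_discrete.comp hW).aestronglyMeasurable (∑ k ∈ range (n + 1), |g k|)
    (ae_of_all _ fun ω ↦ single_le_sum (f := fun k ↦ |g k|) (fun _ _ ↦ abs_nonneg _)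
      (mem_range.mpr (Nat.lt_succ_of_le (hle ω))))

lemma integrable_comp_sum [IsFiniteMeasure μ] (hmeas : ∀ i, Measurable (N i))
    (hle : ∀ i ω, N i ω ≤ 1) (s : Finset ι) (g : ℕ → ℝ) :
    Integrable (fun ω ↦ g (∑ j ∈ s, N j ω)) μ :=
  integrable_comp_of_le (Finset.measurable_sum _ fun j _ ↦ hmeas j) (sum_le_card_of_le_one hle s) g

lemma integrable_cast_mul_comp_sum [IsFiniteMeasure μ] (hmeas : ∀ i, Measurable (N i))
    (hle : ∀ i ω, N i ω ≤ 1) (i : ι) (s : Finset ι) (g : ℕ → ℝ) :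
    Integrable (fun ω ↦ (N i ω : ℝ) * g (∑ j ∈ s, N j ω)) μ :=
  (integrable_comp_sum hmeas hle s g).bdd_mul (c := 1)
    (Measurable.of_discrete.comp (hmeas i)).aestronglyMeasurable
    (ae_of_all _ fun ω ↦ by simpa using hle i ω)

section SumErase

variable [DecidableEq ι]

lemma integral_cast_mul_comp_sum_erase (hmeas : ∀ i, Measurable (N i)) (hindep : iIndepFun N μ)
    (i : ι) (g : ℕ → ℝ) :
    ∫ ω, (N i ω : ℝ) * g (∑ j ∈ univ.erase i, N j ω) ∂μ =
      (∫ ω, (N i ω : ℝ) ∂μ) * ∫ ω, g (∑ j ∈ univ.erase i, N j ω) ∂μ := by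
  have h := (hindep.indepFun_finsetSum_of_notMem hmeas (notMem_erase i univ)).symm.comp
    (measurable_of_countable (Nat.cast : ℕ → ℝ)) (measurable_of_countable g)
  simp only [Function.comp_def, Finset.sum_apply] at h
  exact h.integral_fun_mul_eq_mul_integral
    (Measurable.of_discrete.comp (hmeas i)).aestronglyMeasurable
    (Measurable.of_discrete.comp (Finset.measurable_sum _ fun j _ ↦ hmeas j)).aestronglyMeasurable

lemma integral_cast_sum_mul_comp_sum [IsFiniteMeasure μ] (hmeas : ∀ i, Measurable (N i))
    (hle : ∀ i ω, N i ω ≤ 1) (hindep : iIndepFun N μ) (g : ℕ → ℝ) :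
    ∫ ω, ((∑ i, N i ω : ℕ) : ℝ) * g (∑ i, N i ω) ∂μ =
      ∑ i, (∫ ω, (N i ω : ℝ) ∂μ) * ∫ ω, g (∑ j ∈ univ.erase i, N j ω + 1) ∂μ := by
  have hpt : ∀ ω i, (N i ω : ℝ) * g (∑ j, N j ω) = N i ω * g (∑ j ∈ univ.erase i, N j ω + 1) := by
    intro ω i
    rw [← sum_erase_add _ _ (mem_univ i)]
    rcases Nat.le_one_iff_eq_zero_or_eq_one.mp (hle i ω) with h | h <;> simp [h]
  simp_rw [Nat.cast_sum, sum_mul, hpt]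
  rw [integral_finsetSum _ fun i _ ↦
    integrable_cast_mul_comp_sum hmeas hle i (univ.erase i) fun k ↦ g (k + 1)]
  exact sum_congr rfl fun i _ ↦ integral_cast_mul_comp_sum_erase hmeas hindep i (fun k ↦ g (k + 1))

lemma integral_comp_sum_succ_sub [IsFiniteMeasure μ] (hmeas : ∀ i, Measurable (N i))
    (hle : ∀ i ω, N i ω ≤ 1) (hindep : iIndepFun N μ) (g : ℕ → ℝ) (i : ι) :
    ∫ ω, g (∑ j, N j ω + 1) ∂μ - ∫ ω, g (∑ j ∈ univ.erase i, N j ω + 1) ∂μ =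
      (∫ ω, (N i ω : ℝ) ∂μ) *
        ∫ ω, (g (∑ j ∈ univ.erase i, N j ω + 2) - g (∑ j ∈ univ.erase i, N j ω + 1)) ∂μ := by
  have hpt : ∀ ω, g (∑ j, N j ω + 1) - g (∑ j ∈ univ.erase i, N j ω + 1) =
      N i ω * (g (∑ j ∈ univ.erase i, N j ω + 2) - g (∑ j ∈ univ.erase i, N j ω + 1)) := by
    intro ω
    rw [← sum_erase_add _ _ (mem_univ i)]
    rcases Nat.le_one_iff_eq_zero_or_eq_one.mp (hle i ω) with h | h <;> simp [h, add_assoc]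
  rw [← integral_sub (integrable_comp_sum hmeas hle _ (fun k ↦ g (k + 1)))
    (integrable_comp_sum hmeas hle _ (fun k ↦ g (k + 1)))]
  simp_rw [hpt]
  exact integral_cast_mul_comp_sum_erase hmeas hindep i (fun k ↦ g (k + 2) - g (k + 1))

theorem integral_poissonStein_sum_bernoulli [IsFiniteMeasure μ] (hmeas : ∀ i, Measurable (N i))
    (hle : ∀ i ω, N i ω ≤ 1) (hindep : iIndepFun N μ) (g : ℕ → ℝ) :
    ∫ ω, ((∑ i, ∫ ω, (N i ω : ℝ) ∂μ) * g (∑ i, N i ω + 1) -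
        ((∑ i, N i ω : ℕ) : ℝ) * g (∑ i, N i ω)) ∂μ =
      ∑ i, (∫ ω, (N i ω : ℝ) ∂μ) ^ 2 *
        ∫ ω, (g (∑ j ∈ univ.erase i, N j ω + 2) - g (∑ j ∈ univ.erase i, N j ω + 1)) ∂μ := by
  rw [integral_sub ((integrable_comp_sum hmeas hle _ fun k ↦ g (k + 1)).const_mul _)
      (integrable_comp_sum hmeas hle _ fun k ↦ k * g k),
    integral_const_mul, integral_cast_sum_mul_comp_sum hmeas hle hindep, sum_mul,
    ← sum_sub_distrib]
  refine sum_congr rfl fun i _ ↦ ?_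
  rw [← mul_sub, integral_comp_sum_succ_sub hmeas hle hindep, ← mul_assoc, sq]

end SumErase

theorem abs_measureReal_sum_preimage_sub_poissonMeasure_real_le [IsProbabilityMeasure μ]
    (hmeas : ∀ i, Measurable (N i)) (hle : ∀ i ω, N i ω ≤ 1) (hindep : iIndepFun N μ)
    {r : ℝ≥0} (hr : 0 < r) (hsum : ∑ i, ∫ ω, (N i ω : ℝ) ∂μ = r) (B : Set ℕ) :
    |μ.real ((fun ω ↦ ∑ i, N i ω) ⁻¹' B) - Po(r).real B| ≤
      (∑ i, (∫ ω, (N i ω : ℝ) ∂μ) ^ 2) / r := by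
  classical
  set f := poissonSteinSol r (B.indicator 1 - fun _ ↦ Po(r).real B)
  have hstein := integral_poissonStein_sum_bernoulli hmeas hle hindep f
  rw [hsum] at hstein
  have hprob : ∫ ω, (r * f (∑ i, N i ω + 1) - ((∑ i, N i ω : ℕ) : ℝ) * f (∑ i, N i ω)) ∂μ =
      μ.real ((fun ω ↦ ∑ i, N i ω) ⁻¹' B) - Po(r).real B := calc
    _ = ∫ ω, (B.indicator 1 (∑ i, N i ω) - Po(r).real B) ∂μ :=
      integral_congr_ae (ae_of_all _ fun ω ↦ poissonSteinSol_spec hr _ _)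
    _ = _ := by
      rw [integral_sub (integrable_comp_sum hmeas hle _ _) (integrable_const _), integral_const,
        probReal_univ, one_smul, ← integral_indicator_one
          ((Finset.measurable_sum _ fun i _ ↦ hmeas i) MeasurableSet.of_discrete)]
      rfl
  have hΔ : ∀ i, |∫ ω, (f (∑ j ∈ univ.erase i, N j ω + 2) - f (∑ j ∈ univ.erase i, N j ω + 1)) ∂μ|
      ≤ 1 / r := fun i ↦ by
    simpa using norm_integral_le_of_norm_le_const (μ := μ) (f := fun ω ↦
        f (∑ j ∈ univ.erase i, N j ω + 2) - f (∑ j ∈ univ.erase i, N j ω + 1))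
      (ae_of_all _ fun ω ↦ abs_poissonSteinSol_indicator_succ_sub_le hr B _)
  rw [← hprob, hstein, sum_div]
  refine (abs_sum_le_sum_abs _ _).trans (sum_le_sum fun i _ ↦ ?_)
  rw [abs_mul, abs_sq, div_eq_mul_one_div]
  exact mul_le_mul_of_nonneg_left (hΔ i) (sq_nonneg _)

theorem abs_map_sum_sub_poissonMeasure_real_le [IsProbabilityMeasure μ] {X : ι → Ω → ℝ}
    (hmeas : ∀ i, Measurable (X i)) (hBer : ∀ i ω, X i ω = 0 ∨ X i ω = 1)
    (hindep : iIndepFun X μ) {r : ℝ≥0} (hr : 0 < r) (hsum : ∑ i, ∫ ω, X i ω ∂μ = r)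
    {A : Set ℝ} (hA : MeasurableSet A) :
    |(μ.map fun ω ↦ ∑ i, X i ω).real A - Po(r).real (Nat.cast ⁻¹' A)| ≤
      (∑ i, (∫ ω, X i ω ∂μ) ^ 2) / r := by
  have hcast : ∀ i ω, (⌊X i ω⌋₊ : ℝ) = X i ω := fun i ω ↦ by
    rcases hBer i ω with h | h <;> simp [h]
  have hpre : (fun ω ↦ ∑ i, X i ω) ⁻¹' A = (fun ω ↦ ∑ i, ⌊X i ω⌋₊) ⁻¹' (Nat.cast ⁻¹' A) := by
    ext ω
    simp only [Set.mem_preimage, Nat.cast_sum, hcast]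
  have h := abs_measureReal_sum_preimage_sub_poissonMeasure_real_le (N := fun i ω ↦ ⌊X i ω⌋₊)
    (fun i ↦ Nat.measurable_floor.comp (hmeas i))
    (fun i ω ↦ by rcases hBer i ω with h | h <;> simp [h])
    (hindep.comp (fun _ ↦ Nat.floor) fun _ ↦ Nat.measurable_floor) hr (by simpa only [hcast])
    (Nat.cast ⁻¹' A)
  simp only [hcast] at h
  rwa [map_measureReal_apply (Finset.measurable_sum _ fun i _ ↦ hmeas i) hA, hpre]

end BernoulliSum

/-- Two sums of independent Bernoulli random variables whose mean parameters have
the same total `μ > 0` satisfy `d_TV(∑ Xᵢ, ∑ Y_j) ≤ (∑ pᵢ² + ∑ q_j²)/μ`. -/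
theorem dTV_PBD_same_mean
    {Ω₁ Ω₂ : Type*} [MeasurableSpace Ω₁] [MeasurableSpace Ω₂]
    (μ₁ : Measure Ω₁) (μ₂ : Measure Ω₂)
    [IsProbabilityMeasure μ₁] [IsProbabilityMeasure μ₂]
    (n m : ℕ) (X : Fin n → Ω₁ → ℝ) (Y : Fin m → Ω₂ → ℝ)
    (hXmeas : ∀ i, Measurable (X i)) (hYmeas : ∀ j, Measurable (Y j))
    (hXBer : ∀ i ω, X i ω = 0 ∨ X i ω = 1)
    (hYBer : ∀ j ω, Y j ω = 0 ∨ Y j ω = 1)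
    (hXindep : iIndepFun X μ₁)
    (hYindep : iIndepFun Y μ₂)
    (p : Fin n → ℝ) (q : Fin m → ℝ)
    (hp : ∀ i, p i = ∫ ω, X i ω ∂μ₁) (hq : ∀ j, q j = ∫ ω, Y j ω ∂μ₂)
    (mean : ℝ) (hmean_pos : 0 < mean)
    (hpsum : (∑ i, p i) = mean) (hqsum : (∑ j, q j) = mean) :
    dTV (μ₁.map (fun ω => ∑ i, X i ω)) (μ₂.map (fun ω => ∑ j, Y j ω))
      ≤ ((∑ i, (p i) ^ 2) + ∑ j, (q j) ^ 2) / mean := by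
  obtain rfl : p = _ := funext hp
  obtain rfl : q = _ := funext hq
  lift mean to ℝ≥0 using hmean_pos.le with r
  refine ciSup_le fun A ↦ ?_
  have hX := abs_map_sum_sub_poissonMeasure_real_le hXmeas hXBer hXindep
    (NNReal.coe_pos.mp hmean_pos) hpsum A.2
  have hY := abs_map_sum_sub_poissonMeasure_real_le hYmeas hYBer hYindep
    (NNReal.coe_pos.mp hmean_pos) hqsum A.2
  rw [add_div]
  exact (abs_sub_le _ _ _).trans (add_le_add hX ((abs_sub_comm _ _).trans_le hY))
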